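/- Let a, b ∈ ℂ, let ρ ∈ (0, 1/(15π)), and use the admissible-sequence definitions of b_k(λ,t) and b′_k(λ,t) for the Mathieu potential. There exist K > 0 and N ∈ ℕ such that for all integers n > N, all t ∈ [0, ρ], and all λ ∈ U(n,t,ρ): the series B(λ,t) = Σ_{k≥1} b_k(λ,t) and B′(λ,t) = Σ_{k≥1} b′_k(λ,t) converge absolutely, |B(λ,t)| ≤ K·n^{−5}, and |B′(λ,t)| ≤ K·n^{−5}. -/

import Mathlib

open Finset

namespace Mathieu

/-- `±1` value attached to a boolean index. -/
def sgn (x : Bool) : ℤ := if x then 1 else -1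

/-- Partial sum `n₁ + ⋯ + n_s` of the `±1` sequence encoded by `v`. -/
def psum {k : ℕ} (v : Fin k → Bool) (s : ℕ) : ℤ :=
  ∑ i ∈ Finset.univ.filter (fun i : Fin k => (i : ℕ) < s), sgn (v i)

/-- `n`-admissible sequences: all partial sums avoid `0` and `2n`. -/
def Admissible (n k : ℕ) (v : Fin k → Bool) : Prop :=
  ∀ s : Fin k, psum v ((s : ℕ) + 1) ≠ 0 ∧ psum v ((s : ℕ) + 1) ≠ 2 * (n : ℤ)

/-- `n`-coadmissible sequences: all partial sums avoid `0` and `-2n`. -/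
def Coadmissible (n k : ℕ) (v : Fin k → Bool) : Prop :=
  ∀ s : Fin k, psum v ((s : ℕ) + 1) ≠ 0 ∧ psum v ((s : ℕ) + 1) ≠ -(2 * (n : ℤ))

instance (n k : ℕ) : DecidablePred (Admissible n k) := fun v => by
  unfold Admissible; infer_instance

instance (n k : ℕ) : DecidablePred (Coadmissible n k) := fun v => by
  unfold Coadmissible; infer_instance

/-- Fourier coefficients of the Mathieu potential: `q₋₁ = a`, `q₁ = b`, else `0`. -/
noncomputable def qc (a b : ℂ) (m : ℤ) : ℂ :=
  if m = -1 then a else if m = 1 then b else 0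

/-- Resolvent factor `(λ - (2π(n - j) + t)²)⁻¹`. -/
noncomputable def denom (n : ℕ) (lam : ℂ) (t : ℝ) (j : ℤ) : ℂ :=
  (lam - (((2 * Real.pi * ((n : ℝ) - (j : ℝ)) + t) ^ 2 : ℝ) : ℂ))⁻¹

/-- Resolvent factor `(λ - (2π(n + j) - t)²)⁻¹`. -/
noncomputable def denom' (n : ℕ) (lam : ℂ) (t : ℝ) (j : ℤ) : ℂ :=
  (lam - (((2 * Real.pi * ((n : ℝ) + (j : ℝ)) - t) ^ 2 : ℝ) : ℂ))⁻¹

/-- The term `a_k(λ,t)` of the perturbation series (formula (13)). -/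
noncomputable def ak (a b : ℂ) (n k : ℕ) (lam : ℂ) (t : ℝ) : ℂ :=
  ∑ v ∈ Finset.univ.filter (Admissible n k),
    qc a b (-(psum v k)) *
      ∏ i : Fin k, (qc a b (sgn (v i)) * denom n lam t (psum v ((i : ℕ) + 1)))

/-- The term `b_k(λ,t)` of the perturbation series (formula (14)). -/
noncomputable def bk (a b : ℂ) (n k : ℕ) (lam : ℂ) (t : ℝ) : ℂ :=
  ∑ v ∈ Finset.univ.filter (Admissible n k),
    qc a b (2 * (n : ℤ) - psum v k) *
      ∏ i : Fin k, (qc a b (sgn (v i)) * denom n lam t (psum v ((i : ℕ) + 1)))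

/-- The term `a′_k(λ,t)` of the perturbation series (formula (17)). -/
noncomputable def ak' (a b : ℂ) (n k : ℕ) (lam : ℂ) (t : ℝ) : ℂ :=
  ∑ v ∈ Finset.univ.filter (Coadmissible n k),
    qc a b (-(psum v k)) *
      ∏ i : Fin k, (qc a b (sgn (v i)) * denom' n lam t (psum v ((i : ℕ) + 1)))

/-- The term `b′_k(λ,t)` of the perturbation series (formula (18)). -/
noncomputable def bk' (a b : ℂ) (n k : ℕ) (lam : ℂ) (t : ℝ) : ℂ :=
  ∑ v ∈ Finset.univ.filter (Coadmissible n k),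
    qc a b (-(2 * (n : ℤ)) - psum v k) *
      ∏ i : Fin k, (qc a b (sgn (v i)) * denom' n lam t (psum v ((i : ℕ) + 1)))

/-- `A(λ,t) = Σ_{k≥1} a_k(λ,t)`. -/
noncomputable def Afun (a b : ℂ) (n : ℕ) (lam : ℂ) (t : ℝ) : ℂ := ∑' k : ℕ, ak a b n (k + 1) lam t

/-- `A′(λ,t) = Σ_{k≥1} a′_k(λ,t)`. -/
noncomputable def A'fun (a b : ℂ) (n : ℕ) (lam : ℂ) (t : ℝ) : ℂ := ∑' k : ℕ, ak' a b n (k + 1) lam t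

/-- `B(λ,t) = Σ_{k≥1} b_k(λ,t)`. -/
noncomputable def Bfun (a b : ℂ) (n : ℕ) (lam : ℂ) (t : ℝ) : ℂ := ∑' k : ℕ, bk a b n (k + 1) lam t

/-- `B′(λ,t) = Σ_{k≥1} b′_k(λ,t)`. -/
noncomputable def B'fun (a b : ℂ) (n : ℕ) (lam : ℂ) (t : ℝ) : ℂ := ∑' k : ℕ, bk' a b n (k + 1) lam t

end Mathieu

open Mathieu

/-!
On `U(n,t,ρ)` every resolvent factor of `b_k` and `b′_k` has norm at most `1/n`: for a partial
sum `j ∉ {0, 2n}` the difference `(2πn+t)² - (2π(n-j)+t)²` factors as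
`(2πj)(2π(2n-j) + 2t)`, of size at least `25 |j| |2n-j| ≥ 25 n`, while `λ` lies within `n` of
`(2πn+t)²`. With `M = max ‖a‖ ‖b‖` and `2^k` sign sequences this gives `‖b_k‖ ≤ M (2M/n)^k`.
The outer coefficient `q_{2n - (n₁+⋯+n_k)}` vanishes unless `k ≥ 2n-1`, so for `n ≥ 3` the series
starts at `k = 5` and is dominated by a geometric series of size `O(n⁻⁵)`; likewise for `b′_k`.
-/

namespace Mathieu

open Real

lemma norm_qc_le (a b : ℂ) (m : ℤ) : ‖qc a b m‖ ≤ max ‖a‖ ‖b‖ := by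
  unfold qc
  split_ifs
  · exact le_max_left _ _
  · exact le_max_right _ _
  · simp

lemma abs_psum_le {k : ℕ} (v : Fin k → Bool) (s : ℕ) : |psum v s| ≤ s := by
  calc |psum v s| ≤ ∑ i ∈ univ.filter (fun i : Fin k => (i : ℕ) < s), |sgn (v i)| :=
        abs_sum_le_sum_abs _ _
    _ = #{i : Fin k | (i : ℕ) < s} := by
        rw [card_eq_sum_ones, Nat.cast_sum]
        refine sum_congr rfl fun i _ => ?_
        cases v i <;> simp [sgn]
    _ ≤ s := by
        rw [Fin.card_filter_val_lt]
        exact_mod_cast min_le_right k s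

lemma bk_eq_zero_of_lt (a b : ℂ) {n k : ℕ} (lam : ℂ) (t : ℝ) (hk : k + 1 < 2 * n) :
    bk a b n k lam t = 0 := by
  refine sum_eq_zero fun v _ => ?_
  obtain ⟨h₁, h₂⟩ := abs_le.mp (abs_psum_le v k)
  simp only [qc, if_neg (by omega : 2 * (n : ℤ) - psum v k ≠ -1),
    if_neg (by omega : 2 * (n : ℤ) - psum v k ≠ 1), zero_mul]

lemma bk'_eq_zero_of_lt (a b : ℂ) {n k : ℕ} (lam : ℂ) (t : ℝ) (hk : k + 1 < 2 * n) :
    bk' a b n k lam t = 0 := by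
  refine sum_eq_zero fun v _ => ?_
  obtain ⟨h₁, h₂⟩ := abs_le.mp (abs_psum_le v k)
  simp only [qc, if_neg (by omega : -(2 * (n : ℤ)) - psum v k ≠ -1),
    if_neg (by omega : -(2 * (n : ℤ)) - psum v k ≠ 1), zero_mul]

lemma le_abs_mul_abs_two_mul_sub (n : ℕ) {j : ℤ} (hj₀ : j ≠ 0) (hj₂ : j ≠ 2 * n) :
    (n : ℝ) ≤ |(j : ℝ)| * |2 * (n : ℝ) - j| := by
  have h₁ : (1 : ℝ) ≤ |(j : ℝ)| := by exact_mod_cast Int.one_le_abs hj₀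
  have h₂ : (1 : ℝ) ≤ |2 * n - (j : ℝ)| := by
    exact_mod_cast Int.one_le_abs (sub_ne_zero.mpr hj₂.symm)
  have h₃ : |(j : ℝ) + (2 * n - j)| ≤ |(j : ℝ)| + |2 * (n : ℝ) - j| := abs_add_le _ _
  rw [add_sub_cancel, abs_of_nonneg (by positivity)] at h₃
  nlinarith [mul_nonneg (sub_nonneg.mpr h₁) (sub_nonneg.mpr h₂)]

lemma five_mul_abs_le_abs_two_pi_mul_add {x d : ℝ} (hx : 1 ≤ |x|) (hd : |d| ≤ 1) :
    5 * |x| ≤ |2 * π * x + d| := by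
  have h := abs_add_le (2 * π * x + d) (-d)
  rw [add_neg_cancel_right, abs_neg, abs_mul, abs_of_pos (by positivity : 0 < 2 * π)] at h
  nlinarith [pi_gt_three]

lemma mul_le_abs_sq_sub_sq (n : ℕ) {j : ℤ} (hj₀ : j ≠ 0) (hj₂ : j ≠ 2 * n) {t s : ℝ}
    (hsub : |t - s| ≤ 1) (hadd : |t + s| ≤ 1) :
    25 * (n : ℝ) ≤ |(2 * π * n + t) ^ 2 - (2 * π * (n - j) + s) ^ 2| := by
  have h₁ : 5 * |(j : ℝ)| ≤ |2 * π * j + (t - s)| :=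
    five_mul_abs_le_abs_two_pi_mul_add (by exact_mod_cast Int.one_le_abs hj₀) hsub
  have h₂ : 5 * |2 * n - (j : ℝ)| ≤ |2 * π * (2 * n - j) + (t + s)| :=
    five_mul_abs_le_abs_two_pi_mul_add
      (by exact_mod_cast Int.one_le_abs (sub_ne_zero.mpr hj₂.symm)) hadd
  have hfac : (2 * π * n + t) ^ 2 - (2 * π * (n - j) + s) ^ 2 =
      (2 * π * j + (t - s)) * (2 * π * (2 * n - j) + (t + s)) := by ring
  rw [hfac, abs_mul]
  calc 25 * (n : ℝ) ≤ 5 * |(j : ℝ)| * (5 * |2 * n - (j : ℝ)|) := by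
        nlinarith [le_abs_mul_abs_two_mul_sub n hj₀ hj₂]
    _ ≤ _ := mul_le_mul h₁ h₂ (by positivity) (abs_nonneg _)

lemma norm_inv_sub_le_of_norm_sub_le {𝕜 : Type*} [NormedField 𝕜] {z w x : 𝕜} {c : ℝ}
    (hc : 0 < c) (hz : ‖z - w‖ ≤ c) (hwx : 2 * c ≤ ‖w - x‖) : ‖(z - x)⁻¹‖ ≤ c⁻¹ := by
  have h := norm_sub_le_norm_sub_add_norm_sub w z x
  rw [norm_sub_rev w z] at h
  rw [norm_inv]
  exact inv_anti₀ hc (by linarith)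

lemma norm_inv_sub_sq_le {n : ℕ} (hn : 0 < n) {j : ℤ} (hj₀ : j ≠ 0) (hj₂ : j ≠ 2 * n)
    {t s : ℝ} (hsub : |t - s| ≤ 1) (hadd : |t + s| ≤ 1) {lam : ℂ}
    (hlam : ‖lam - (((2 * π * n + t) ^ 2 : ℝ) : ℂ)‖ ≤ n) :
    ‖(lam - (((2 * π * (n - j) + s) ^ 2 : ℝ) : ℂ))⁻¹‖ ≤ (n : ℝ)⁻¹ := by
  refine norm_inv_sub_le_of_norm_sub_le (by exact_mod_cast hn) hlam ?_
  rw [← Complex.ofReal_sub, Complex.norm_real, Real.norm_eq_abs]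
  have := mul_le_abs_sq_sub_sq n hj₀ hj₂ hsub hadd
  linarith [(Nat.cast_nonneg n : (0 : ℝ) ≤ n)]

section Denominators

variable {n : ℕ} {lam : ℂ} {t : ℝ}

lemma norm_denom_le (hn : 0 < n) (ht : |t| ≤ 1 / 2)
    (hlam : ‖lam - (((2 * π * n + t) ^ 2 : ℝ) : ℂ)‖ ≤ n) {j : ℤ} (hj₀ : j ≠ 0)
    (hj₂ : j ≠ 2 * n) : ‖denom n lam t j‖ ≤ (n : ℝ)⁻¹ :=
  norm_inv_sub_sq_le hn hj₀ hj₂ (by simp) (by rw [← two_mul, abs_mul]; norm_num; linarith) hlam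

lemma norm_denom'_le (hn : 0 < n) (ht : |t| ≤ 1 / 2)
    (hlam : ‖lam - (((2 * π * n + t) ^ 2 : ℝ) : ℂ)‖ ≤ n) {j : ℤ} (hj₀ : j ≠ 0)
    (hj₂ : j ≠ -(2 * n)) : ‖denom' n lam t j‖ ≤ (n : ℝ)⁻¹ := by
  have h : 2 * π * (n + j) - t = 2 * π * (n - ((-j : ℤ) : ℝ)) + -t := by push_cast; ring
  rw [denom', h]
  exact norm_inv_sub_sq_le hn (neg_ne_zero.mpr hj₀) (by omega)
    (by rw [sub_neg_eq_add, ← two_mul, abs_mul]; norm_num; linarith) (by simp) hlam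

end Denominators

lemma norm_sum_mul_prod_le {k : ℕ} (S : Finset (Fin k → Bool)) (c : (Fin k → Bool) → ℂ)
    (x : (Fin k → Bool) → Fin k → ℂ) {M r : ℝ} (hM : 0 ≤ M) (hr : 0 ≤ r)
    (hc : ∀ v ∈ S, ‖c v‖ ≤ M) (hx : ∀ v ∈ S, ∀ i, ‖x v i‖ ≤ r) :
    ‖∑ v ∈ S, c v * ∏ i, x v i‖ ≤ M * (2 * r) ^ k := by
  have hterm : ∀ v ∈ S, ‖c v * ∏ i, x v i‖ ≤ M * r ^ k := fun v hv => by
    rw [norm_mul, norm_prod]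
    refine mul_le_mul (hc v hv) ?_ (by positivity) hM
    calc ∏ i, ‖x v i‖ ≤ ∏ _i : Fin k, r :=
          prod_le_prod (fun _ _ => norm_nonneg _) fun i _ => hx v hv i
      _ = r ^ k := by simp
  have hcard : (#S : ℝ) ≤ 2 ^ k := by
    exact_mod_cast (card_le_univ S).trans_eq (by simp)
  calc ‖∑ v ∈ S, c v * ∏ i, x v i‖ ≤ ∑ v ∈ S, ‖c v * ∏ i, x v i‖ := norm_sum_le _ _
    _ ≤ #S * (M * r ^ k) := by simpa using sum_le_sum hterm
    _ ≤ 2 ^ k * (M * r ^ k) := by gcongr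
    _ = M * (2 * r) ^ k := by ring

section Terms

variable (a b : ℂ) (n k : ℕ) (lam : ℂ) (t : ℝ) {δ : ℝ}

lemma norm_bk_le (hδ : 0 ≤ δ) (hden : ∀ j : ℤ, j ≠ 0 → j ≠ 2 * n → ‖denom n lam t j‖ ≤ δ) :
    ‖bk a b n k lam t‖ ≤ max ‖a‖ ‖b‖ * (2 * max ‖a‖ ‖b‖ * δ) ^ k := by
  have hM : 0 ≤ max ‖a‖ ‖b‖ := le_max_of_le_left (norm_nonneg a)
  rw [mul_assoc]
  refine norm_sum_mul_prod_le _ _ _ hM (by positivity) (fun v _ => norm_qc_le a b _)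
    fun v hv i => ?_
  rw [norm_mul]
  have hv := (mem_filter.mp hv).2 i
  exact mul_le_mul (norm_qc_le a b _) (hden _ hv.1 hv.2) (norm_nonneg _) hM

lemma norm_bk'_le (hδ : 0 ≤ δ)
    (hden : ∀ j : ℤ, j ≠ 0 → j ≠ -(2 * n) → ‖denom' n lam t j‖ ≤ δ) :
    ‖bk' a b n k lam t‖ ≤ max ‖a‖ ‖b‖ * (2 * max ‖a‖ ‖b‖ * δ) ^ k := by
  have hM : 0 ≤ max ‖a‖ ‖b‖ := le_max_of_le_left (norm_nonneg a)
  rw [mul_assoc]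
  refine norm_sum_mul_prod_le _ _ _ hM (by positivity) (fun v _ => norm_qc_le a b _)
    fun v hv i => ?_
  rw [norm_mul]
  have hv := (mem_filter.mp hv).2 i
  exact mul_le_mul (norm_qc_le a b _) (hden _ hv.1 hv.2) (norm_nonneg _) hM

end Terms

lemma summable_norm_and_norm_tsum_le {F : ℕ → ℂ} {C r : ℝ} {m : ℕ} (hr₀ : 0 ≤ r)
    (hr : r ≤ 1 / 2) (hhead : ∀ k < m, F k = 0) (hF : ∀ k, ‖F k‖ ≤ C * r ^ k) :
    Summable (fun k => ‖F k‖) ∧ ‖∑' k, F k‖ ≤ 2 * C * (2 * r) ^ m := by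
  have hC : 0 ≤ C := by simpa using (norm_nonneg _).trans (hF 0)
  have hgeom : ∀ k, ‖F k‖ ≤ C * (2 * r) ^ m * (1 / 2) ^ k := fun k => by
    rcases lt_or_ge k m with hk | hk
    · rw [hhead k hk, norm_zero]
      positivity
    · obtain ⟨l, rfl⟩ := Nat.exists_eq_add_of_le hk
      calc ‖F (m + l)‖ ≤ C * (r ^ m * r ^ l) := by rw [← pow_add]; exact hF _
        _ ≤ C * (r ^ m * (1 / 2) ^ l) := by gcongr
        _ = C * (2 * r) ^ m * (1 / 2) ^ (m + l) := by
          have h2 : (2 : ℝ) ^ m * (1 / 2) ^ m = 1 := by rw [← mul_pow]; norm_num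
          rw [mul_pow, pow_add]
          linear_combination -(C * r ^ m * (1 / 2) ^ l) * h2
  have hsum := hasSum_geometric_two.mul_left (C * (2 * r) ^ m)
  exact ⟨.of_nonneg_of_le (fun _ => norm_nonneg _) hgeom hsum.summable,
    (tsum_of_norm_bounded hsum hgeom).trans_eq (by ring)⟩

lemma summable_norm_and_norm_tsum_le_inv_pow_five {F : ℕ → ℂ} {M : ℝ} {n : ℕ} (hM : 0 ≤ M)
    (hn : 4 * M ≤ n) (hn₀ : 0 < n) (hhead : ∀ k < 4, F k = 0)
    (hF : ∀ k, ‖F k‖ ≤ M * (2 * M * (n : ℝ)⁻¹) ^ (k + 1)) :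
    Summable (fun k => ‖F k‖) ∧ ‖∑' k, F k‖ ≤ 1024 * M ^ 6 * ((n : ℝ) ^ 5)⁻¹ := by
  have hr : 2 * M * (n : ℝ)⁻¹ ≤ 1 / 2 := by
    rw [← div_eq_mul_inv, div_le_iff₀ (by exact_mod_cast hn₀)]
    linarith
  obtain ⟨hsum, hle⟩ := summable_norm_and_norm_tsum_le
    (C := M * (2 * M * (n : ℝ)⁻¹)) (by positivity) hr hhead
    fun k => (hF k).trans_eq (by ring)
  exact ⟨hsum, hle.trans_eq (by ring)⟩

end Mathieu

theorem stmt6_general (a b : ℂ) (ρ : ℝ) (hρ₁ : ρ < 1 / (15 * Real.pi)) :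
    ∃ K : ℝ, 0 < K ∧ ∃ N : ℕ, ∀ n : ℕ, N < n →
      ∀ t ∈ Set.Icc (0 : ℝ) ρ, ∀ lam : ℂ,
      ‖lam - (((2 * Real.pi * (n : ℝ) + t) ^ 2 : ℝ) : ℂ)‖ ≤ 15 * Real.pi * (n : ℝ) * ρ →
        Summable (fun k : ℕ => ‖bk a b n (k + 1) lam t‖) ∧
        Summable (fun k : ℕ => ‖bk' a b n (k + 1) lam t‖) ∧
        ‖Bfun a b n lam t‖ ≤ K * ((n : ℝ) ^ 5)⁻¹ ∧
        ‖B'fun a b n lam t‖ ≤ K * ((n : ℝ) ^ 5)⁻¹ := by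
  set M := max ‖a‖ ‖b‖
  have hM : 0 ≤ M := le_max_of_le_left (norm_nonneg a)
  refine ⟨1024 * M ^ 6 + 1, by positivity, max 2 ⌈4 * M⌉₊, ?_⟩
  rintro n hn t ⟨ht₀, htρ⟩ lam hlam
  obtain ⟨hn₂, hnM⟩ := max_lt_iff.mp hn
  have hn₀ : 0 < n := by omega
  have hnM : 4 * M ≤ n := (Nat.le_ceil _).trans (by exact_mod_cast hnM.le)
  have hρ : 15 * Real.pi * ρ < 1 := by
    rwa [lt_div_iff₀ (by positivity), mul_comm] at hρ₁
  have ht : |t| ≤ 1 / 2 := by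
    rw [abs_of_nonneg ht₀]
    nlinarith [Real.pi_gt_three]
  have hU : ‖lam - (((2 * Real.pi * (n : ℝ) + t) ^ 2 : ℝ) : ℂ)‖ ≤ n :=
    hlam.trans (by nlinarith [(Nat.cast_nonneg n : (0 : ℝ) ≤ n)])
  obtain ⟨hBsum, hB⟩ := summable_norm_and_norm_tsum_le_inv_pow_five hM hnM hn₀
    (fun k hk => bk_eq_zero_of_lt a b lam t (by omega))
    fun k => norm_bk_le a b n (k + 1) lam t (by positivity) fun _ => norm_denom_le hn₀ ht hU
  obtain ⟨hB'sum, hB'⟩ := summable_norm_and_norm_tsum_le_inv_pow_five hM hnM hn₀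
    (fun k hk => bk'_eq_zero_of_lt a b lam t (by omega))
    fun k => norm_bk'_le a b n (k + 1) lam t (by positivity) fun _ => norm_denom'_le hn₀ ht hU
  have hK : 1024 * M ^ 6 * ((n : ℝ) ^ 5)⁻¹ ≤ (1024 * M ^ 6 + 1) * ((n : ℝ) ^ 5)⁻¹ := by
    gcongr
    linarith
  exact ⟨hBsum, hB'sum, hB.trans hK, hB'.trans hK⟩

/-- Formula (57): on `U(n,t,ρ)` the series `B(λ,t)` and `B′(λ,t)` converge
absolutely and are `O(n⁻⁵)`. -/
theorem stmt6 (a b : ℂ) (ρ : ℝ) (hρ₀ : 0 < ρ) (hρ₁ : ρ < 1 / (15 * Real.pi)) :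
    ∃ K : ℝ, 0 < K ∧ ∃ N : ℕ, ∀ n : ℕ, N < n →
      ∀ t ∈ Set.Icc (0 : ℝ) ρ, ∀ lam : ℂ,
      ‖lam - (((2 * Real.pi * (n : ℝ) + t) ^ 2 : ℝ) : ℂ)‖ ≤ 15 * Real.pi * (n : ℝ) * ρ →
        Summable (fun k : ℕ => ‖bk a b n (k + 1) lam t‖) ∧
        Summable (fun k : ℕ => ‖bk' a b n (k + 1) lam t‖) ∧
        ‖Bfun a b n lam t‖ ≤ K * ((n : ℝ) ^ 5)⁻¹ ∧
        ‖B'fun a b n lam t‖ ≤ K * ((n : ℝ) ^ 5)⁻¹ :=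
  stmt6_general a b ρ hρ₁
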